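/- Thermodynamic Cost of Diagnosability: Let k be an output complex, let δ = max(x^rst_k, x^act_k) > 0 be the detection threshold, and suppose the system is diagnostic, i.e., |x^rst_k − x^act_k| ≥ ε for some resolution ε > 0. Assume σ > 0, the Active state x^act is strictly positive, X_res + X_mix > 0, X_mix > 0, and the amplifiability satisfies ψ > 0. Then ψ ≥ ε² / (2 σ δ) − 1. -/

import Mathlib

open Finset

/-- A complex is a pair `(u, v)`: `u` counts the `m` non-input monomer types,
`v` the input monomers. -/
abbrev Cx (m : ℕ) := (Fin m → ℕ) × ℕ

/-- Pseudo-Helmholtz free energy of a configuration `x` over the complexes `P`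
with per-complex energies `G` (the convention `0 · log 0 = 0` holds since
`Real.log 0 = 0`). -/
noncomputable def gFE {m : ℕ} (P : Finset (Cx m)) (G : Cx m → ℝ) (x : Cx m → ℝ) : ℝ :=
  ∑ p ∈ P, x p * (Real.log (x p) - 1 + G p)

/-- Mass-conservation map: total concentration of each non-input monomer type and of
the input monomer. -/
noncomputable def Amap {m : ℕ} (P : Finset (Cx m)) (x : Cx m → ℝ) : (Fin m → ℝ) × ℝ :=
  (fun i => ∑ p ∈ P, (p.1 i : ℝ) * x p, ∑ p ∈ P, (p.2 : ℝ) * x p)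

/-- Input-core projection: each pure input complex `(0, v)` with `v ≥ 1` receives the
total concentration of all complexes containing exactly `v` input monomers. -/
noncomputable def ic {m : ℕ} (P : Finset (Cx m)) (x : Cx m → ℝ) : Cx m → ℝ :=
  fun q => if q.1 = 0 ∧ 1 ≤ q.2 then ∑ p ∈ P.filter (fun r => r.2 = q.2), x p else 0

/-- Residual-core projection: each pure residual complex `(u, 0)` with `u ≠ 0` receives
the total concentration of all complexes with residual core `u`. -/
noncomputable def rc {m : ℕ} (P : Finset (Cx m)) (x : Cx m → ℝ) : Cx m → ℝ :=
  fun q => if q.2 = 0 ∧ q.1 ≠ 0 then ∑ p ∈ P.filter (fun r => r.1 = q.1), x p else 0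

/-- The mixed complexes of `P`. -/
def mixedP {m : ℕ} (P : Finset (Cx m)) : Finset (Cx m) :=
  P.filter (fun q => q.1 ≠ 0 ∧ 1 ≤ q.2)

/-- Binding free energy `ΔG^bind_{u,v} = G_{u,v} − G_{u,0} − G_{0,v}`. -/
noncomputable def dGbind {m : ℕ} (G : Cx m → ℝ) (p : Cx m) : ℝ :=
  G p - G (p.1, 0) - G (0, p.2)

/-- Total concentration of pure input complexes. -/
noncomputable def Xinp {m : ℕ} (P : Finset (Cx m)) (x : Cx m → ℝ) : ℝ :=
  ∑ p ∈ P.filter (fun q : Cx m => q.1 = 0 ∧ 1 ≤ q.2), x p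

/-- Total concentration of pure residual complexes. -/
noncomputable def Xres {m : ℕ} (P : Finset (Cx m)) (x : Cx m → ℝ) : ℝ :=
  ∑ p ∈ P.filter (fun q : Cx m => q.2 = 0 ∧ q.1 ≠ 0), x p

/-- Total concentration of mixed complexes. -/
noncomputable def Xmix {m : ℕ} (P : Finset (Cx m)) (x : Cx m → ℝ) : ℝ :=
  ∑ p ∈ mixedP P, x p

/-- Maximal input binding strength `ΔG_max = max over mixed complexes of (−ΔG^bind)`. -/
noncomputable def dGmax {m : ℕ} (P : Finset (Cx m)) (G : Cx m → ℝ)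
    (hne : (mixedP P).Nonempty) : ℝ :=
  (mixedP P).sup' hne (fun p => -(dGbind G p))

/-!
STATEMENT 15 (Thermodynamic Cost of Diagnosability):
Let `k` be an output complex with detection threshold `δ = max(x^rst_k, x^act_k) > 0`,
and suppose the system is diagnostic: `|x^rst_k − x^act_k| ≥ ε` for resolution `ε > 0`.
Assume `σ > 0`, strictly positive Active state, `X_res + X_mix > 0`, `X_mix > 0`, and
amplifiability `ψ > 0`. Then `ψ ≥ ε² / (2 σ δ) − 1`.
-/

section Helpers

/-! ### Scalar helper lemmas -/

lemma mul_log_sub_le {a b : ℝ} (ha : 0 < a) (hb : 0 < b) :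
    a * Real.log b - a * Real.log a ≤ b - a := by
  have h := Real.log_le_sub_one_of_pos (div_pos hb ha)
  rw [Real.log_div hb.ne' ha.ne'] at h
  have := mul_le_mul_of_nonneg_left h ha.le
  have hba : a * (b / a - 1) = b - a := by field_simp
  nlinarith [this]

lemma kl_nonneg {a b : ℝ} (ha : 0 ≤ a) (hb : 0 < b) :
    0 ≤ a * Real.log a - a * Real.log b - a + b := by
  rcases eq_or_lt_of_le ha with h | h
  · simp [← h]; linarith
  · have := mul_log_sub_le h hb
    linarith

lemma ineq_i {t : ℝ} (ht : 0 < t) (ht1 : t ≤ 1) :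
    1 - t + (1 - t) ^ 2 / 2 ≤ -Real.log t := by
  set φ : ℝ → ℝ := fun s => -Real.log s - (1 - s) - (1 - s) ^ 2 / 2 with hφ
  have key : AntitoneOn φ (Set.Icc t 1) := by
    apply antitoneOn_of_hasDerivWithinAt_nonpos (convex_Icc t 1)
      (f' := fun s => -(s⁻¹) + 1 + (1 - s))
    · apply ContinuousOn.sub
      apply ContinuousOn.sub
      · exact (Real.continuousOn_log.mono (by
          intro s hs; simp at hs ⊢; intro h; rw [h] at hs; exact absurd hs.1 (by linarith))).neg
      · fun_prop
      · fun_prop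
    · intro s hs
      rw [interior_Icc] at hs
      have hs0 : 0 < s := lt_trans ht hs.1
      have h1 : HasDerivAt (fun s : ℝ => -Real.log s) (-(s⁻¹)) s :=
        (Real.hasDerivAt_log hs0.ne').neg
      have h2 : HasDerivAt (fun s : ℝ => (1 - s)) (-1 : ℝ) s := by
        simpa using (hasDerivAt_id s).const_sub 1
      have h3 : HasDerivAt (fun s : ℝ => (1 - s) ^ 2 / 2) ((1 - s) * (-1)) s := by
        have := (h2.pow 2).div_const 2
        exact this.congr_deriv (by norm_num; ring)
      have := (h1.sub h2).sub h3
      refine (HasDerivAt.hasDerivWithinAt (by exact this.congr_deriv (by ring)))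
    · intro s hs
      rw [interior_Icc] at hs
      have hs0 : 0 < s := lt_trans ht hs.1
      have : -(s⁻¹) + 1 + (1 - s) = -((1 - s) ^ 2) / s := by field_simp; ring
      rw [this]
      apply div_nonpos_of_nonpos_of_nonneg (by nlinarith [sq_nonneg (1 - s)]) hs0.le
  have h := key (Set.mem_Icc.2 ⟨le_refl t, ht1⟩) (Set.mem_Icc.2 ⟨ht1, le_refl 1⟩) ht1
  simp only [hφ, Real.log_one] at h
  nlinarith [h]

lemma ineq_ii {t : ℝ} (ht : 0 < t) (ht1 : t ≤ 1) :
    (1 - t) ^ 2 / 2 ≤ t * Real.log t + 1 - t := by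
  set φ : ℝ → ℝ := fun s => s * Real.log s + 1 - s - (1 - s) ^ 2 / 2 with hφ
  have key : AntitoneOn φ (Set.Icc t 1) := by
    apply antitoneOn_of_hasDerivWithinAt_nonpos (convex_Icc t 1)
      (f' := fun s => Real.log s + 1 - s)
    · apply ContinuousOn.sub
      apply ContinuousOn.sub
      · apply ContinuousOn.add
        · exact continuousOn_id.mul (Real.continuousOn_log.mono (by
            intro s hs; simp at hs ⊢; intro h; rw [h] at hs; exact absurd hs.1 (by linarith)))
        · fun_prop
      · fun_prop
      · fun_prop
    · intro s hs
      rw [interior_Icc] at hs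
      have hs0 : 0 < s := lt_trans ht hs.1
      have h1 : HasDerivAt (fun s : ℝ => s * Real.log s) (Real.log s + 1) s := by
        have := (hasDerivAt_id s).mul (Real.hasDerivAt_log hs0.ne')
        exact this.congr_deriv (by simp [hs0.ne'])
      have h2 : HasDerivAt (fun s : ℝ => (1 - s)) (-1 : ℝ) s := by
        simpa using (hasDerivAt_id s).const_sub 1
      have h3 : HasDerivAt (fun s : ℝ => (1 - s) ^ 2 / 2) ((1 - s) * (-1)) s := by
        have := (h2.pow 2).div_const 2
        exact this.congr_deriv (by norm_num; ring)
      have := ((h1.add_const 1).sub (hasDerivAt_id s)).sub h3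
      refine (HasDerivAt.hasDerivWithinAt (by exact this.congr_deriv (by ring)))
    · intro s hs
      rw [interior_Icc] at hs
      have hs0 : 0 < s := lt_trans ht hs.1
      have := Real.log_le_sub_one_of_pos hs0
      linarith
  have h := key (Set.mem_Icc.2 ⟨le_refl t, ht1⟩) (Set.mem_Icc.2 ⟨ht1, le_refl 1⟩) ht1
  simp only [hφ, Real.log_one] at h
  nlinarith [h]

lemma pinsker_pt {a b : ℝ} (ha : 0 ≤ a) (hb : 0 < b) :
    (a - b) ^ 2 / (2 * max a b) ≤ a * Real.log a - a * Real.log b - a + b := by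
  rcases eq_or_lt_of_le ha with h | h
  · rw [← h]
    simp only [zero_mul, max_eq_right hb.le]
    rw [div_le_iff₀ (by linarith)]
    nlinarith
  · rcases le_total a b with hab | hab
    · rw [max_eq_right hab, div_le_iff₀ (by linarith)]
      have h2 := ineq_ii (t := a / b) (div_pos h hb) ((div_le_one hb).2 hab)
      rw [Real.log_div h.ne' hb.ne'] at h2
      have h3 := mul_le_mul_of_nonneg_left h2 hb.le
      have e1 : b * ((1 - a / b) ^ 2 / 2) = (a - b) ^ 2 / (2 * b) := by
        field_simp; ring
      have e2 : b * (a / b * (Real.log a - Real.log b) + 1 - a / b) =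
          a * Real.log a - a * Real.log b + b - a := by
        field_simp
      rw [e1, e2] at h3
      rw [div_le_iff₀ (by linarith : (0:ℝ) < 2 * b)] at h3
      nlinarith [h3]
    · rw [max_eq_left hab, div_le_iff₀ (by nlinarith)]
      have h2 := ineq_i (t := b / a) (div_pos hb (lt_of_lt_of_le hb hab))
        ((div_le_one (by linarith)).2 hab)
      have hA : 0 < a := lt_of_lt_of_le hb hab
      rw [Real.log_div hb.ne' hA.ne'] at h2
      have h3 := mul_le_mul_of_nonneg_left h2 hA.le
      have e1 : a * (1 - b / a + (1 - b / a) ^ 2 / 2) = a - b + (a - b) ^ 2 / (2 * a) := by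
        field_simp
      have e2 : a * -(Real.log b - Real.log a) = a * Real.log a - a * Real.log b := by ring
      rw [e1, e2] at h3
      have h4 : (a - b) ^ 2 / (2 * a) ≤ a * Real.log a - a * Real.log b - a + b := by linarith
      rw [div_le_iff₀ (by linarith : (0:ℝ) < 2 * a)] at h4
      linarith

/-! ### Fiberwise summation lemmas -/

lemma fiberV {m : ℕ} (P : Finset (Cx m))
    (hPclosed : ∀ p ∈ P, p.1 ≠ 0 → 1 ≤ p.2 →
      (p.1, (0 : ℕ)) ∈ P ∧ ((0 : Fin m → ℕ), p.2) ∈ P)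
    (f : Cx m → ℝ) :
    ∑ p ∈ P.filter (fun p => p.1 = 0 ∧ 1 ≤ p.2), ∑ q ∈ P.filter (fun q => q.2 = p.2), f q
      = ∑ q ∈ P.filter (fun q => 1 ≤ q.2), f q := by
  classical
  rw [Finset.sum_congr rfl (fun p _ => Finset.sum_filter _ f), Finset.sum_comm]
  simp only [Finset.sum_filter]
  apply Finset.sum_congr rfl
  intro q hq
  have step : ∀ p ∈ P, (if p.1 = 0 ∧ 1 ≤ p.2 then if q.2 = p.2 then f q else 0 else 0)
      = (if 1 ≤ q.2 then if p = ((0 : Fin m → ℕ), q.2) then f q else 0 else 0) := by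
    intro p hp
    by_cases h1 : 1 ≤ q.2
    · rw [if_pos h1]
      by_cases h2 : p = ((0 : Fin m → ℕ), q.2)
      · rw [if_pos h2, if_pos, if_pos] <;> simp [h2, h1]
      · rw [if_neg h2]
        by_cases h3 : p.1 = 0 ∧ 1 ≤ p.2
        · rw [if_pos h3, if_neg]
          intro hc
          exact h2 (Prod.ext h3.1 hc.symm)
        · rw [if_neg h3]
    · rw [if_neg h1]
      by_cases h3 : p.1 = 0 ∧ 1 ≤ p.2
      · rw [if_pos h3, if_neg]
        intro hc; rw [hc] at h1; exact h1 h3.2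
      · rw [if_neg h3]
  rw [Finset.sum_congr rfl step]
  by_cases h1 : 1 ≤ q.2
  · simp only [if_pos h1]
    rw [Finset.sum_ite_eq' P ((0 : Fin m → ℕ), q.2) (fun _ => f q)]
    have hmem : ((0 : Fin m → ℕ), q.2) ∈ P := by
      by_cases h2 : q.1 = 0
      · have : q = ((0 : Fin m → ℕ), q.2) := Prod.ext h2 rfl
        rwa [← this]
      · exact (hPclosed q hq h2 h1).2
    rw [if_pos hmem]
  · simp only [if_neg h1, Finset.sum_const_zero]

lemma fiberU {m : ℕ} (P : Finset (Cx m))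
    (hPclosed : ∀ p ∈ P, p.1 ≠ 0 → 1 ≤ p.2 →
      (p.1, (0 : ℕ)) ∈ P ∧ ((0 : Fin m → ℕ), p.2) ∈ P)
    (f : Cx m → ℝ) :
    ∑ p ∈ P.filter (fun p => p.2 = 0 ∧ p.1 ≠ 0), ∑ q ∈ P.filter (fun q => q.1 = p.1), f q
      = ∑ q ∈ P.filter (fun q => q.1 ≠ 0), f q := by
  classical
  rw [Finset.sum_congr rfl (fun p _ => Finset.sum_filter _ f), Finset.sum_comm]
  simp only [Finset.sum_filter]
  apply Finset.sum_congr rfl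
  intro q hq
  have step : ∀ p ∈ P, (if p.2 = 0 ∧ p.1 ≠ 0 then if q.1 = p.1 then f q else 0 else 0)
      = (if q.1 ≠ 0 then if p = (q.1, (0 : ℕ)) then f q else 0 else 0) := by
    intro p hp
    by_cases h1 : q.1 ≠ 0
    · rw [if_pos h1]
      by_cases h2 : p = (q.1, (0 : ℕ))
      · rw [if_pos h2, if_pos, if_pos] <;> simp [h2, h1]
      · rw [if_neg h2]
        by_cases h3 : p.2 = 0 ∧ p.1 ≠ 0
        · rw [if_pos h3, if_neg]
          intro hc
          exact h2 (Prod.ext hc.symm h3.1)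
        · rw [if_neg h3]
    · rw [if_neg h1]
      by_cases h3 : p.2 = 0 ∧ p.1 ≠ 0
      · rw [if_pos h3, if_neg]
        intro hc; rw [hc] at h1; exact h1 h3.2
      · rw [if_neg h3]
  rw [Finset.sum_congr rfl step]
  by_cases h1 : q.1 ≠ 0
  · simp only [if_pos h1]
    rw [Finset.sum_ite_eq' P (q.1, (0 : ℕ)) (fun _ => f q)]
    have hmem : (q.1, (0 : ℕ)) ∈ P := by
      rcases Nat.eq_zero_or_pos q.2 with h2 | h2
      · have : q = (q.1, (0 : ℕ)) := Prod.ext rfl h2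
        rwa [← this]
      · exact (hPclosed q hq h1 h2).1
    rw [if_pos hmem]
  · simp only [if_neg h1, Finset.sum_const_zero]

end Helpers

section Struct

variable {m : ℕ}

/-- Total concentration of complexes with input count `v`. -/
noncomputable def IvF (P : Finset (Cx m)) (x : Cx m → ℝ) (v : ℕ) : ℝ :=
  ∑ q ∈ P.filter (fun r => r.2 = v), x q

/-- Total concentration of complexes with residual core `u`. -/
noncomputable def RuF (P : Finset (Cx m)) (x : Cx m → ℝ) (u : Fin m → ℕ) : ℝ :=
  ∑ q ∈ P.filter (fun r => r.1 = u), x q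

lemma ic_eq (P : Finset (Cx m)) (x : Cx m → ℝ) (p : Cx m) :
    ic P x p = if p.1 = 0 ∧ 1 ≤ p.2 then IvF P x p.2 else 0 := rfl

lemma rc_eq (P : Finset (Cx m)) (x : Cx m → ℝ) (p : Cx m) :
    rc P x p = if p.2 = 0 ∧ p.1 ≠ 0 then RuF P x p.1 else 0 := rfl

lemma IvF_nonneg (P : Finset (Cx m)) {x : Cx m → ℝ} (hx : ∀ p ∈ P, 0 ≤ x p) (v : ℕ) :
    0 ≤ IvF P x v :=
  Finset.sum_nonneg fun q hq => hx q (Finset.mem_filter.1 hq).1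

lemma RuF_nonneg (P : Finset (Cx m)) {x : Cx m → ℝ} (hx : ∀ p ∈ P, 0 ≤ x p) (u : Fin m → ℕ) :
    0 ≤ RuF P x u :=
  Finset.sum_nonneg fun q hq => hx q (Finset.mem_filter.1 hq).1

lemma le_IvF (P : Finset (Cx m)) {x : Cx m → ℝ} (hx : ∀ p ∈ P, 0 ≤ x p)
    {q : Cx m} (hq : q ∈ P) : x q ≤ IvF P x q.2 :=
  Finset.single_le_sum (f := x) (fun p hp => hx p (Finset.mem_filter.1 hp).1)
    (Finset.mem_filter.2 ⟨hq, rfl⟩)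

lemma le_RuF (P : Finset (Cx m)) {x : Cx m → ℝ} (hx : ∀ p ∈ P, 0 ≤ x p)
    {q : Cx m} (hq : q ∈ P) : x q ≤ RuF P x q.1 :=
  Finset.single_le_sum (f := x) (fun p hp => hx p (Finset.mem_filter.1 hp).1)
    (Finset.mem_filter.2 ⟨hq, rfl⟩)

/-- g of the input-core projection, regrouped over all input-containing complexes. -/
lemma gic_eq (P : Finset (Cx m)) (G : Cx m → ℝ) (x : Cx m → ℝ)
    (hPclosed : ∀ p ∈ P, p.1 ≠ 0 → 1 ≤ p.2 →
      (p.1, (0 : ℕ)) ∈ P ∧ ((0 : Fin m → ℕ), p.2) ∈ P) :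
    gFE P G (ic P x)
      = ∑ q ∈ P.filter (fun q => 1 ≤ q.2),
          x q * (Real.log (IvF P x q.2) - 1 + G (0, q.2)) := by
  classical
  simp only [gFE]
  rw [← Finset.sum_filter_of_ne (p := fun p => p.1 = 0 ∧ 1 ≤ p.2)
    (f := fun p => ic P x p * (Real.log (ic P x p) - 1 + G p))
    (by
      intro p hp hne
      by_contra hc
      simp only [ic_eq] at hne
      rw [if_neg hc] at hne
      simp at hne)]
  rw [← fiberV P hPclosed (fun q => x q * (Real.log (IvF P x q.2) - 1 + G (0, q.2)))]
  apply Finset.sum_congr rfl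
  intro p hp
  obtain ⟨hpP, hp1, hp2⟩ := Finset.mem_filter.1 hp
  rw [ic_eq, if_pos ⟨hp1, hp2⟩]
  have hpG : G ((0 : Fin m → ℕ), p.2) = G p := by
    have : ((0 : Fin m → ℕ), p.2) = p := Prod.ext hp1.symm rfl
    rw [this]
  have hIv : IvF P x p.2 = ∑ q ∈ P.filter (fun r => r.2 = p.2), x q := rfl
  rw [hIv, Finset.sum_mul]
  apply Finset.sum_congr rfl
  intro q hq
  have hq2 : q.2 = p.2 := (Finset.mem_filter.1 hq).2
  rw [hq2, hpG, hIv]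

/-- g of the residual-core projection, regrouped. -/
lemma grc_eq (P : Finset (Cx m)) (G : Cx m → ℝ) (x : Cx m → ℝ)
    (hPclosed : ∀ p ∈ P, p.1 ≠ 0 → 1 ≤ p.2 →
      (p.1, (0 : ℕ)) ∈ P ∧ ((0 : Fin m → ℕ), p.2) ∈ P) :
    gFE P G (rc P x)
      = ∑ q ∈ P.filter (fun q => q.1 ≠ 0),
          x q * (Real.log (RuF P x q.1) - 1 + G (q.1, 0)) := by
  classical
  simp only [gFE]
  rw [← Finset.sum_filter_of_ne (p := fun p => p.2 = 0 ∧ p.1 ≠ 0)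
    (f := fun p => rc P x p * (Real.log (rc P x p) - 1 + G p))
    (by
      intro p hp hne
      by_contra hc
      simp only [rc_eq] at hne
      rw [if_neg hc] at hne
      simp at hne)]
  rw [← fiberU P hPclosed (fun q => x q * (Real.log (RuF P x q.1) - 1 + G (q.1, 0)))]
  apply Finset.sum_congr rfl
  intro p hp
  obtain ⟨hpP, hp1, hp2⟩ := Finset.mem_filter.1 hp
  rw [rc_eq, if_pos ⟨hp1, hp2⟩]
  have hpG : G (p.1, (0 : ℕ)) = G p := by
    have : (p.1, (0 : ℕ)) = p := Prod.ext rfl hp1.symm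
    rw [this]
  have hRu : RuF P x p.1 = ∑ q ∈ P.filter (fun r => r.1 = p.1), x q := rfl
  rw [hRu, Finset.sum_mul]
  apply Finset.sum_congr rfl
  intro q hq
  have hq1 : q.1 = p.1 := (Finset.mem_filter.1 hq).2
  rw [hq1, hpG, hRu]

/-- Input-monomer mass carried by the input-core projection. -/
lemma ic_mass (P : Finset (Cx m)) (x : Cx m → ℝ)
    (hPclosed : ∀ p ∈ P, p.1 ≠ 0 → 1 ≤ p.2 →
      (p.1, (0 : ℕ)) ∈ P ∧ ((0 : Fin m → ℕ), p.2) ∈ P) :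
    ∑ p ∈ P, (p.2 : ℝ) * ic P x p = ∑ q ∈ P, (q.2 : ℝ) * x q := by
  classical
  rw [← Finset.sum_filter_of_ne (p := fun p => p.1 = 0 ∧ 1 ≤ p.2)
    (f := fun p => (p.2 : ℝ) * ic P x p)
    (by
      intro p hp hne
      by_contra hc
      simp only [ic_eq] at hne
      rw [if_neg hc, mul_zero] at hne
      exact hne rfl)]
  rw [← Finset.sum_filter_of_ne (p := fun q => 1 ≤ q.2)
    (f := fun q => (q.2 : ℝ) * x q)
    (by
      intro q hq hne
      by_contra hc
      have h0 : q.2 = 0 := by omega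
      simp [h0] at hne)]
  rw [← fiberV P hPclosed (fun q => (q.2 : ℝ) * x q)]
  apply Finset.sum_congr rfl
  intro p hp
  obtain ⟨hpP, hp1, hp2⟩ := Finset.mem_filter.1 hp
  rw [ic_eq, if_pos ⟨hp1, hp2⟩]
  have hIv : IvF P x p.2 = ∑ q ∈ P.filter (fun r => r.2 = p.2), x q := rfl
  rw [hIv, Finset.mul_sum]
  apply Finset.sum_congr rfl
  intro q hq
  have hq2 : q.2 = p.2 := (Finset.mem_filter.1 hq).2
  rw [hq2]

/-- Residual-monomer mass carried by the residual-core projection. -/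
lemma rc_mass (P : Finset (Cx m)) (x : Cx m → ℝ)
    (hPclosed : ∀ p ∈ P, p.1 ≠ 0 → 1 ≤ p.2 →
      (p.1, (0 : ℕ)) ∈ P ∧ ((0 : Fin m → ℕ), p.2) ∈ P) (i : Fin m) :
    ∑ p ∈ P, (p.1 i : ℝ) * rc P x p = ∑ q ∈ P, (q.1 i : ℝ) * x q := by
  classical
  rw [← Finset.sum_filter_of_ne (p := fun p => p.2 = 0 ∧ p.1 ≠ 0)
    (f := fun p => (p.1 i : ℝ) * rc P x p)
    (by
      intro p hp hne
      by_contra hc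
      simp only [rc_eq] at hne
      rw [if_neg hc, mul_zero] at hne
      exact hne rfl)]
  rw [← Finset.sum_filter_of_ne (p := fun q => q.1 ≠ 0)
    (f := fun q => (q.1 i : ℝ) * x q)
    (by
      intro q hq hne
      by_contra hc
      simp [hc] at hne)]
  rw [← fiberU P hPclosed (fun q => (q.1 i : ℝ) * x q)]
  apply Finset.sum_congr rfl
  intro p hp
  obtain ⟨hpP, hp1, hp2⟩ := Finset.mem_filter.1 hp
  rw [rc_eq, if_pos ⟨hp1, hp2⟩]
  have hRu : RuF P x p.1 = ∑ q ∈ P.filter (fun r => r.1 = p.1), x q := rfl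
  rw [hRu, Finset.mul_sum]
  apply Finset.sum_congr rfl
  intro q hq
  have hq1 : q.1 = p.1 := (Finset.mem_filter.1 hq).2
  rw [hq1]

lemma ic_mass_res (P : Finset (Cx m)) (x : Cx m → ℝ) (i : Fin m) :
    ∑ p ∈ P, (p.1 i : ℝ) * ic P x p = 0 := by
  apply Finset.sum_eq_zero
  intro p _
  rw [ic_eq]
  by_cases h : p.1 = 0 ∧ 1 ≤ p.2
  · rw [if_pos h, h.1]
    simp
  · rw [if_neg h, mul_zero]

lemma rc_mass_inp (P : Finset (Cx m)) (x : Cx m → ℝ) :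
    ∑ p ∈ P, (p.2 : ℝ) * rc P x p = 0 := by
  apply Finset.sum_eq_zero
  intro p _
  rw [rc_eq]
  by_cases h : p.2 = 0 ∧ p.1 ≠ 0
  · rw [if_pos h, h.1]
    simp
  · rw [if_neg h, mul_zero]

/-- Splitting the input-containing complexes into pure-input and mixed. -/
lemma split1 (P : Finset (Cx m)) (f : Cx m → ℝ) :
    ∑ q ∈ P.filter (fun q => 1 ≤ q.2), f q
      = ∑ q ∈ P.filter (fun p => p.1 = 0 ∧ 1 ≤ p.2), f q + ∑ q ∈ mixedP P, f q := by
  classical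
  have e1 : P.filter (fun p => p.1 = 0 ∧ 1 ≤ p.2)
      = (P.filter (fun q => 1 ≤ q.2)).filter (fun q => q.1 = 0) := by
    ext q
    simp only [Finset.mem_filter]
    tauto
  have e2 : mixedP P = (P.filter (fun q => 1 ≤ q.2)).filter (fun q => ¬q.1 = 0) := by
    ext q
    simp only [mixedP, Finset.mem_filter]
    tauto
  rw [e1, e2, Finset.sum_filter_add_sum_filter_not]

/-- Splitting the residual-containing complexes into pure-residual and mixed. -/
lemma split2 (P : Finset (Cx m)) (f : Cx m → ℝ) :
    ∑ q ∈ P.filter (fun q => q.1 ≠ 0), f q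
      = ∑ q ∈ P.filter (fun p => p.2 = 0 ∧ p.1 ≠ 0), f q + ∑ q ∈ mixedP P, f q := by
  classical
  have e1 : P.filter (fun p => p.2 = 0 ∧ p.1 ≠ 0)
      = (P.filter (fun q => q.1 ≠ 0)).filter (fun q => q.2 = 0) := by
    ext q
    simp only [Finset.mem_filter]
    tauto
  have e2 : mixedP P = (P.filter (fun q => q.1 ≠ 0)).filter (fun q => ¬q.2 = 0) := by
    ext q
    simp only [mixedP, Finset.mem_filter]
    constructor
    · rintro ⟨h1, h2, h3⟩
      exact ⟨⟨h1, h2⟩, by omega⟩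
    · rintro ⟨⟨h1, h2⟩, h3⟩
      exact ⟨h1, h2, by omega⟩
  rw [e1, e2, Finset.sum_filter_add_sum_filter_not]

/-- Splitting all complexes into pure-input, pure-residual and mixed. -/
lemma split3 (P : Finset (Cx m)) (hP0 : ((0 : Fin m → ℕ), (0 : ℕ)) ∉ P) (f : Cx m → ℝ) :
    ∑ q ∈ P, f q
      = ∑ q ∈ P.filter (fun p => p.1 = 0 ∧ 1 ≤ p.2), f q
        + ∑ q ∈ P.filter (fun p => p.2 = 0 ∧ p.1 ≠ 0), f q
        + ∑ q ∈ mixedP P, f q := by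
  classical
  have e1 : P.filter (fun p => p.1 = 0 ∧ 1 ≤ p.2) = P.filter (fun q => q.1 = 0) := by
    ext q
    simp only [Finset.mem_filter]
    constructor
    · tauto
    · rintro ⟨hq, h1⟩
      refine ⟨hq, h1, ?_⟩
      by_contra hc
      have : q = ((0 : Fin m → ℕ), (0 : ℕ)) := Prod.ext h1 (by omega)
      rw [this] at hq
      exact hP0 hq
  rw [e1, add_assoc, ← split2 P f,
    ← Finset.sum_filter_add_sum_filter_not P (fun q => q.1 = 0) f]

/-- The double-counting bound `∑_{mixed} Iv·Ru ≤ σ · (Xres + Xmix)`. -/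
lemma prodBound (P : Finset (Cx m)) {x : Cx m → ℝ} (hx : ∀ p ∈ P, 0 ≤ x p) :
    ∑ q ∈ mixedP P, IvF P x q.2 * RuF P x q.1
      ≤ (∑ q ∈ P, (q.2 : ℝ) * x q) * ∑ q ∈ P.filter (fun q => q.1 ≠ 0), x q := by
  classical
  set A := (mixedP P).image Prod.fst with hA
  set B := (mixedP P).image Prod.snd with hB
  have hsub : mixedP P ⊆ A ×ˢ B := fun q hq =>
    Finset.mem_product.2 ⟨Finset.mem_image_of_mem _ hq, Finset.mem_image_of_mem _ hq⟩
  have step1 : ∑ q ∈ mixedP P, IvF P x q.2 * RuF P x q.1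
      ≤ ∑ q ∈ A ×ˢ B, IvF P x q.2 * RuF P x q.1 :=
    Finset.sum_le_sum_of_subset_of_nonneg hsub
      (fun q _ _ => mul_nonneg (IvF_nonneg P hx _) (RuF_nonneg P hx _))
  have step2 : ∑ q ∈ A ×ˢ B, IvF P x q.2 * RuF P x q.1
      = (∑ v ∈ B, IvF P x v) * ∑ u ∈ A, RuF P x u := by
    rw [Finset.sum_product]
    calc ∑ u ∈ A, ∑ v ∈ B, IvF P x v * RuF P x u
        = ∑ u ∈ A, (∑ v ∈ B, IvF P x v) * RuF P x u := by
          apply Finset.sum_congr rfl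
          intro u _
          rw [Finset.sum_mul]
      _ = (∑ v ∈ B, IvF P x v) * ∑ u ∈ A, RuF P x u := by rw [Finset.mul_sum]
  have hBsum : ∑ v ∈ B, IvF P x v = ∑ q ∈ P, (if q.2 ∈ B then x q else 0) := by
    simp only [IvF, Finset.sum_filter]
    rw [Finset.sum_comm]
    apply Finset.sum_congr rfl
    intro q _
    exact Finset.sum_ite_eq B q.2 (fun _ => x q)
  have step3 : ∑ v ∈ B, IvF P x v ≤ ∑ q ∈ P, (q.2 : ℝ) * x q := by
    rw [hBsum]
    apply Finset.sum_le_sum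
    intro q hq
    by_cases hmem : q.2 ∈ B
    · rw [if_pos hmem]
      obtain ⟨r, hrM, hr2⟩ := Finset.mem_image.1 hmem
      have h1r : 1 ≤ r.2 := (Finset.mem_filter.1 hrM).2.2
      have hcast : (1 : ℝ) ≤ (q.2 : ℝ) := by
        have : 1 ≤ q.2 := by omega
        exact_mod_cast this
      nlinarith [hx q hq]
    · rw [if_neg hmem]
      exact mul_nonneg (Nat.cast_nonneg _) (hx q hq)
  have hAsum : ∑ u ∈ A, RuF P x u = ∑ q ∈ P, (if q.1 ∈ A then x q else 0) := by
    simp only [RuF, Finset.sum_filter]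
    rw [Finset.sum_comm]
    apply Finset.sum_congr rfl
    intro q _
    exact Finset.sum_ite_eq A q.1 (fun _ => x q)
  have step4 : ∑ u ∈ A, RuF P x u ≤ ∑ q ∈ P.filter (fun q => q.1 ≠ 0), x q := by
    rw [hAsum, Finset.sum_filter]
    apply Finset.sum_le_sum
    intro q hq
    by_cases hmem : q.1 ∈ A
    · rw [if_pos hmem]
      obtain ⟨r, hrM, hr1⟩ := Finset.mem_image.1 hmem
      have h0 : q.1 ≠ 0 := hr1 ▸ (Finset.mem_filter.1 hrM).2.1
      rw [if_pos h0]
    · rw [if_neg hmem]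
      by_cases h0 : q.1 ≠ 0
      · rw [if_pos h0]
        exact hx q hq
      · rw [if_neg h0]
  calc ∑ q ∈ mixedP P, IvF P x q.2 * RuF P x q.1
      ≤ (∑ v ∈ B, IvF P x v) * ∑ u ∈ A, RuF P x u := by rw [← step2]; exact step1
    _ ≤ (∑ q ∈ P, (q.2 : ℝ) * x q) * ∑ q ∈ P.filter (fun q => q.1 ≠ 0), x q := by
        apply mul_le_mul step3 step4
          (Finset.sum_nonneg fun u _ => RuF_nonneg P hx u)
          (Finset.sum_nonneg fun q hq => mul_nonneg (Nat.cast_nonneg _) (hx q hq))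

end Struct

/-- The central free-energy estimate: the free energy of the projections exceeds
that of the active state by at most `σ (1 + ψ)`. -/
lemma key_bound {m : ℕ} (P : Finset (Cx m)) (G : Cx m → ℝ) (x : Cx m → ℝ)
    (hP0 : ((0 : Fin m → ℕ), (0 : ℕ)) ∉ P)
    (hPclosed : ∀ p ∈ P, p.1 ≠ 0 → 1 ≤ p.2 →
      (p.1, (0 : ℕ)) ∈ P ∧ ((0 : Fin m → ℕ), p.2) ∈ P)
    (hx : ∀ p ∈ P, 0 < x p) (hne : (mixedP P).Nonempty)
    (hRM : 0 < Xres P x + Xmix P x) (hM : 0 < Xmix P x)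
    (hS : 0 < ∑ q ∈ P, (q.2 : ℝ) * x q)
    (hψ : 0 < dGmax P G hne + Real.log (Xres P x + Xmix P x)) :
    gFE P G (ic P x) + gFE P G (rc P x) - gFE P G x
      ≤ (∑ q ∈ P, (q.2 : ℝ) * x q)
          * (1 + (dGmax P G hne + Real.log (Xres P x + Xmix P x))) := by
  classical
  have hxnn : ∀ p ∈ P, 0 ≤ x p := fun p hp => (hx p hp).le
  set S := ∑ q ∈ P, (q.2 : ℝ) * x q with hSdef
  set XM := Xmix P x with hXMdef
  set XR := Xres P x with hXRdef
  set DG := dGmax P G hne with hDGdef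
  have hXM_sum : XM = ∑ q ∈ mixedP P, x q := hXMdef
  have hXR_sum : XR = ∑ q ∈ P.filter (fun p => p.2 = 0 ∧ p.1 ≠ 0), x q := hXRdef
  have hmixP : ∀ q ∈ mixedP P, q ∈ P ∧ q.1 ≠ 0 ∧ 1 ≤ q.2 := by
    intro q hq
    have hq' : q ∈ P.filter (fun q => q.1 ≠ 0 ∧ 1 ≤ q.2) := hq
    obtain ⟨h1, h2, h3⟩ := Finset.mem_filter.1 hq'
    exact ⟨h1, h2, h3⟩
  have hXM_le : XM ≤ S := by
    rw [hXM_sum, hSdef]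
    calc ∑ q ∈ mixedP P, x q ≤ ∑ q ∈ mixedP P, (q.2 : ℝ) * x q := by
          apply Finset.sum_le_sum
          intro q hq
          obtain ⟨hqP, _, h1⟩ := hmixP q hq
          have hcast : (1 : ℝ) ≤ (q.2 : ℝ) := by exact_mod_cast h1
          nlinarith [hxnn q hqP]
      _ ≤ ∑ q ∈ P, (q.2 : ℝ) * x q := by
          apply Finset.sum_le_sum_of_subset_of_nonneg
          · show P.filter (fun q => q.1 ≠ 0 ∧ 1 ≤ q.2) ⊆ P
            exact Finset.filter_subset _ _
          · exact fun q hq _ => mul_nonneg (Nat.cast_nonneg _) (hxnn q hq)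
  set lam := S * (XR + XM) / XM with hlamdef
  have hlampos : 0 < lam := div_pos (mul_pos hS hRM) hM
  have hgic := gic_eq P G x hPclosed
  have hgrc := grc_eq P G x hPclosed
  rw [split1] at hgic
  rw [split2] at hgrc
  have hg : gFE P G x
      = ∑ q ∈ P.filter (fun p => p.1 = 0 ∧ 1 ≤ p.2), x q * (Real.log (x q) - 1 + G q)
        + ∑ q ∈ P.filter (fun p => p.2 = 0 ∧ p.1 ≠ 0), x q * (Real.log (x q) - 1 + G q)
        + ∑ q ∈ mixedP P, x q * (Real.log (x q) - 1 + G q) := by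
    simp only [gFE]
    exact split3 P hP0 _
  -- Piece 1: pure-input complexes
  have E1 : ∑ q ∈ P.filter (fun p => p.1 = 0 ∧ 1 ≤ p.2),
        x q * (Real.log (IvF P x q.2) - 1 + G (0, q.2))
      - ∑ q ∈ P.filter (fun p => p.1 = 0 ∧ 1 ≤ p.2), x q * (Real.log (x q) - 1 + G q)
      ≤ XM := by
    rw [← Finset.sum_sub_distrib]
    have hle : ∀ q ∈ P.filter (fun p => p.1 = 0 ∧ 1 ≤ p.2),
        x q * (Real.log (IvF P x q.2) - 1 + G (0, q.2)) - x q * (Real.log (x q) - 1 + G q)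
          ≤ IvF P x q.2 - x q := by
      intro q hq
      obtain ⟨hqP, hq1, hq2⟩ := Finset.mem_filter.1 hq
      have hGq : G ((0 : Fin m → ℕ), q.2) = G q := by
        have h : ((0 : Fin m → ℕ), q.2) = q := Prod.ext hq1.symm rfl
        rw [h]
      have hIvpos : 0 < IvF P x q.2 := lt_of_lt_of_le (hx q hqP) (le_IvF P hxnn hqP)
      have hkey := mul_log_sub_le (hx q hqP) hIvpos
      rw [hGq]
      have e : x q * (Real.log (IvF P x q.2) - 1 + G q) - x q * (Real.log (x q) - 1 + G q)
          = x q * Real.log (IvF P x q.2) - x q * Real.log (x q) := by ring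
      rw [e]
      linarith
    calc _ ≤ ∑ q ∈ P.filter (fun p => p.1 = 0 ∧ 1 ≤ p.2), (IvF P x q.2 - x q) :=
          Finset.sum_le_sum hle
      _ = XM := by
          rw [Finset.sum_sub_distrib]
          simp only [IvF]
          rw [fiberV P hPclosed x, split1 P x, hXM_sum]
          ring
  -- Piece 2: pure-residual complexes
  have E2 : ∑ q ∈ P.filter (fun p => p.2 = 0 ∧ p.1 ≠ 0),
        x q * (Real.log (RuF P x q.1) - 1 + G (q.1, 0))
      - ∑ q ∈ P.filter (fun p => p.2 = 0 ∧ p.1 ≠ 0), x q * (Real.log (x q) - 1 + G q)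
      ≤ XM := by
    rw [← Finset.sum_sub_distrib]
    have hle : ∀ q ∈ P.filter (fun p => p.2 = 0 ∧ p.1 ≠ 0),
        x q * (Real.log (RuF P x q.1) - 1 + G (q.1, 0)) - x q * (Real.log (x q) - 1 + G q)
          ≤ RuF P x q.1 - x q := by
      intro q hq
      obtain ⟨hqP, hq1, hq2⟩ := Finset.mem_filter.1 hq
      have hGq : G (q.1, (0 : ℕ)) = G q := by
        have h : (q.1, (0 : ℕ)) = q := Prod.ext rfl hq1.symm
        rw [h]
      have hRupos : 0 < RuF P x q.1 := lt_of_lt_of_le (hx q hqP) (le_RuF P hxnn hqP)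
      have hkey := mul_log_sub_le (hx q hqP) hRupos
      rw [hGq]
      have e : x q * (Real.log (RuF P x q.1) - 1 + G q) - x q * (Real.log (x q) - 1 + G q)
          = x q * Real.log (RuF P x q.1) - x q * Real.log (x q) := by ring
      rw [e]
      linarith
    calc _ ≤ ∑ q ∈ P.filter (fun p => p.2 = 0 ∧ p.1 ≠ 0), (RuF P x q.1 - x q) :=
          Finset.sum_le_sum hle
      _ = XM := by
          rw [Finset.sum_sub_distrib]
          simp only [RuF]
          rw [fiberU P hPclosed x, split2 P x, ← hXR_sum, hXM_sum]
          ring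
  -- Piece 3: mixed complexes
  have E3 : ∑ q ∈ mixedP P, x q * (Real.log (IvF P x q.2) - 1 + G (0, q.2))
      + ∑ q ∈ mixedP P, x q * (Real.log (RuF P x q.1) - 1 + G (q.1, 0))
      - ∑ q ∈ mixedP P, x q * (Real.log (x q) - 1 + G q)
      ≤ XM * Real.log lam + XM * (DG - 1) := by
    rw [← Finset.sum_add_distrib, ← Finset.sum_sub_distrib]
    have hle : ∀ q ∈ mixedP P,
        x q * (Real.log (IvF P x q.2) - 1 + G (0, q.2))
          + x q * (Real.log (RuF P x q.1) - 1 + G (q.1, 0))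
          - x q * (Real.log (x q) - 1 + G q)
        ≤ IvF P x q.2 * RuF P x q.1 / lam - x q + x q * Real.log lam + x q * (DG - 1) := by
      intro q hq
      obtain ⟨hqP, hqu, hqv⟩ := hmixP q hq
      have hxq := hx q hqP
      have hIvpos : 0 < IvF P x q.2 := lt_of_lt_of_le hxq (le_IvF P hxnn hqP)
      have hRupos : 0 < RuF P x q.1 := lt_of_lt_of_le hxq (le_RuF P hxnn hqP)
      have hApos : 0 < IvF P x q.2 * RuF P x q.1 / lam :=
        div_pos (mul_pos hIvpos hRupos) hlampos
      have hkey := mul_log_sub_le hxq hApos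
      rw [Real.log_div (mul_pos hIvpos hRupos).ne' hlampos.ne',
        Real.log_mul hIvpos.ne' hRupos.ne'] at hkey
      have hdg : -(dGbind G q) ≤ DG := Finset.le_sup' (fun p => -(dGbind G p)) hq
      have hsplitG : G (0, q.2) + G (q.1, 0) - G q = -(dGbind G q) := by
        simp only [dGbind]
        ring
      have h2 : x q * -(dGbind G q) ≤ x q * DG := mul_le_mul_of_nonneg_left hdg hxq.le
      have e : x q * (Real.log (IvF P x q.2) - 1 + G (0, q.2))
          + x q * (Real.log (RuF P x q.1) - 1 + G (q.1, 0))
          - x q * (Real.log (x q) - 1 + G q)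
          = (x q * (Real.log (IvF P x q.2) + Real.log (RuF P x q.1) - Real.log lam)
              - x q * Real.log (x q))
            + x q * Real.log lam - x q + x q * (G (0, q.2) + G (q.1, 0) - G q) - x q * (-1) - x q := by
        ring
      rw [e, hsplitG]
      linarith [hkey, h2]
    calc ∑ q ∈ mixedP P,
          (x q * (Real.log (IvF P x q.2) - 1 + G (0, q.2))
            + x q * (Real.log (RuF P x q.1) - 1 + G (q.1, 0))
            - x q * (Real.log (x q) - 1 + G q))
        ≤ ∑ q ∈ mixedP P,
            (IvF P x q.2 * RuF P x q.1 / lam - x q + x q * Real.log lam + x q * (DG - 1)) :=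
          Finset.sum_le_sum hle
      _ = (∑ q ∈ mixedP P, IvF P x q.2 * RuF P x q.1) / lam - XM + XM * Real.log lam
            + XM * (DG - 1) := by
          rw [Finset.sum_add_distrib, Finset.sum_add_distrib, Finset.sum_sub_distrib,
            ← Finset.sum_div, ← Finset.sum_mul, ← Finset.sum_mul, ← hXM_sum]
      _ ≤ XM - XM + XM * Real.log lam + XM * (DG - 1) := by
          have hPB := prodBound P hxnn
          have hXRXM2 : ∑ q ∈ P.filter (fun q => q.1 ≠ 0), x q = XR + XM := by
            rw [split2 P x, ← hXR_sum, ← hXM_sum]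
          rw [hXRXM2] at hPB
          have hdivle : (∑ q ∈ mixedP P, IvF P x q.2 * RuF P x q.1) / lam
              ≤ S * (XR + XM) / lam := by
            gcongr
          have heq : S * (XR + XM) / lam = XM := by
            rw [hlamdef]
            field_simp
          linarith
      _ = XM * Real.log lam + XM * (DG - 1) := by ring
  have total : gFE P G (ic P x) + gFE P G (rc P x) - gFE P G x
      ≤ XM + XM + (XM * Real.log lam + XM * (DG - 1)) := by
    rw [hgic, hgrc, hg]
    linarith [E1, E2, E3]
  have hloglam : Real.log lam = Real.log S + Real.log (XR + XM) - Real.log XM := by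
    rw [hlamdef, Real.log_div (mul_pos hS hRM).ne' hM.ne', Real.log_mul hS.ne' hRM.ne']
  have hXlog : XM * Real.log S - XM * Real.log XM ≤ S - XM := mul_log_sub_le hM hS
  have hmul : XM * (DG + Real.log (XR + XM)) ≤ S * (DG + Real.log (XR + XM)) :=
    mul_le_mul_of_nonneg_right hXM_le hψ.le
  calc gFE P G (ic P x) + gFE P G (rc P x) - gFE P G x
      ≤ XM + XM + (XM * Real.log lam + XM * (DG - 1)) := total
    _ ≤ S * (1 + (DG + Real.log (XR + XM))) := by
        rw [hloglam]
        nlinarith [hXlog, hmul]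

theorem thermodynamic_cost_of_diagnosability {m : ℕ}
    (P : Finset (Cx m)) (G : Cx m → ℝ) (c : Fin m → ℝ) (σ ε δ : ℝ)
    (hσ : 0 < σ) (hε : 0 < ε)
    (hP0 : ((0 : Fin m → ℕ), (0 : ℕ)) ∉ P)
    (hPclosed : ∀ p ∈ P, p.1 ≠ 0 → 1 ≤ p.2 →
      (p.1, (0 : ℕ)) ∈ P ∧ ((0 : Fin m → ℕ), p.2) ∈ P)
    (xact y : Cx m → ℝ)
    (hact_pos : ∀ p ∈ P, 0 < xact p)
    (hact_feas : Amap P xact = (c, σ))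
    (hact_min : ∀ z : Cx m → ℝ, (∀ p ∈ P, 0 ≤ z p) → Amap P z = (c, σ) →
      gFE P G xact ≤ gFE P G z)
    (hy_nn : ∀ p ∈ P, 0 ≤ y p)
    (hy_feas : Amap P y = (c, 0))
    (hy_min : ∀ z : Cx m → ℝ, (∀ p ∈ P, 0 ≤ z p) → Amap P z = (c, 0) →
      gFE P G y ≤ gFE P G z)
    (hne : (mixedP P).Nonempty)
    (hRM : 0 < Xres P xact + Xmix P xact)
    (hM : 0 < Xmix P xact)
    (ψ : ℝ) (hψ : ψ = dGmax P G hne + Real.log (Xres P xact + Xmix P xact))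
    (hψpos : 0 < ψ)
    (k : Cx m) (hk : k ∈ P)
    (hδ : δ = max ((ic P xact + y) k) (xact k)) (hδpos : 0 < δ)
    (hdiag : ε ≤ |(ic P xact + y) k - xact k|) :
    ε ^ 2 / (2 * σ * δ) - 1 ≤ ψ := by
  classical
  have hxnn : ∀ p ∈ P, 0 ≤ xact p := fun p hp => (hact_pos p hp).le
  -- coordinates of the feasibility statements
  have hact1 : ∀ i, ∑ p ∈ P, (p.1 i : ℝ) * xact p = c i := by
    intro i
    have h := congrArg Prod.fst hact_feas
    simp only [Amap] at h
    exact congrFun h i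
  have hact2 : ∑ p ∈ P, (p.2 : ℝ) * xact p = σ := by
    have h := congrArg Prod.snd hact_feas
    simpa [Amap] using h
  have hy1 : ∀ i, ∑ p ∈ P, (p.1 i : ℝ) * y p = c i := by
    intro i
    have h := congrArg Prod.fst hy_feas
    simp only [Amap] at h
    exact congrFun h i
  have hy2 : ∑ p ∈ P, (p.2 : ℝ) * y p = 0 := by
    have h := congrArg Prod.snd hy_feas
    simpa [Amap] using h
  -- the clamped state vanishes on input-containing complexes
  have hy0 : ∀ p ∈ P, 1 ≤ p.2 → y p = 0 := by
    intro p hp h1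
    have hz := (Finset.sum_eq_zero_iff_of_nonneg
      (fun q hq => mul_nonneg (Nat.cast_nonneg _) (hy_nn q hq))).1 hy2 p hp
    have hne2 : ((p.2 : ℕ) : ℝ) ≠ 0 := Nat.cast_ne_zero.2 (by omega)
    exact (mul_eq_zero.1 hz).resolve_left hne2
  -- the Resting state
  set z : Cx m → ℝ := ic P xact + y with hzdef
  have hz_apply : ∀ p, z p = ic P xact p + y p := fun p => rfl
  have hic_nn : ∀ p, 0 ≤ ic P xact p := by
    intro p
    rw [ic_eq]
    split
    · exact IvF_nonneg P hxnn _
    · exact le_rfl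
  have hz_nn : ∀ p ∈ P, 0 ≤ z p := fun p hp => add_nonneg (hic_nn p) (hy_nn p hp)
  have hz_feas : Amap P z = (c, σ) := by
    simp only [Amap, Prod.mk.injEq]
    constructor
    · funext i
      have e : ∀ p ∈ P, (p.1 i : ℝ) * z p
          = (p.1 i : ℝ) * ic P xact p + (p.1 i : ℝ) * y p := by
        intro p _
        rw [hz_apply]
        ring
      rw [Finset.sum_congr rfl e, Finset.sum_add_distrib, ic_mass_res P xact i, hy1 i, zero_add]
    · have e : ∀ p ∈ P, (p.2 : ℝ) * z p
          = (p.2 : ℝ) * ic P xact p + (p.2 : ℝ) * y p := by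
        intro p _
        rw [hz_apply]
        ring
      rw [Finset.sum_congr rfl e, Finset.sum_add_distrib, ic_mass P xact hPclosed, hy2,
        add_zero, hact2]
  have hz1 : ∀ i, ∑ p ∈ P, (p.1 i : ℝ) * z p = c i := by
    intro i
    have h := congrArg Prod.fst hz_feas
    simp only [Amap] at h
    exact congrFun h i
  have hz2 : ∑ p ∈ P, (p.2 : ℝ) * z p = σ := by
    have h := congrArg Prod.snd hz_feas
    simpa [Amap] using h
  -- the free energy of the Resting state splits
  have hg_split : gFE P G z = gFE P G (ic P xact) + gFE P G y := by
    simp only [gFE, ← Finset.sum_add_distrib]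
    apply Finset.sum_congr rfl
    intro p hp
    rw [hz_apply]
    by_cases h : p.1 = 0 ∧ 1 ≤ p.2
    · rw [hy0 p hp h.2]
      simp
    · have hic0 : ic P xact p = 0 := by rw [ic_eq, if_neg h]
      rw [hic0]
      simp
  -- the Resting state is feasible for the active problem
  have hg_min : gFE P G xact ≤ gFE P G z := hact_min z hz_nn hz_feas
  -- minimality of y against the residual-core projection
  have hrc_nn : ∀ p ∈ P, 0 ≤ rc P xact p := by
    intro p _
    rw [rc_eq]
    split
    · exact RuF_nonneg P hxnn _
    · exact le_rfl
  have hrc_feas : Amap P (rc P xact) = (c, 0) := by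
    simp only [Amap, Prod.mk.injEq]
    constructor
    · funext i
      rw [rc_mass P xact hPclosed i, hact1 i]
    · exact rc_mass_inp P xact
  have hy_le : gFE P G y ≤ gFE P G (rc P xact) := hy_min _ hrc_nn hrc_feas
  -- the first-order optimality term is nonnegative
  set d : Cx m → ℝ := fun p => z p - xact p with hd
  set F : ℝ → ℝ := fun t => ∑ p ∈ P, d p * (Real.log (xact p + t * d p) + G p) with hF
  have hzt_pos : ∀ t, 0 < t → t < 1 → ∀ p ∈ P, 0 < xact p + t * d p := by
    intro t ht0 ht1 p hp
    have e : xact p + t * d p = (1 - t) * xact p + t * z p := by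
      simp only [hd]
      ring
    rw [e]
    have h1 : 0 < (1 - t) * xact p := mul_pos (by linarith) (hact_pos p hp)
    have h2 : 0 ≤ t * z p := mul_nonneg ht0.le (hz_nn p hp)
    linarith
  have hF_nonneg : ∀ t, 0 < t → t < 1 → 0 ≤ F t := by
    intro t ht0 ht1
    have hzt_nn : ∀ p ∈ P, 0 ≤ xact p + t * d p := fun p hp => (hzt_pos t ht0 ht1 p hp).le
    have hzt_feas : Amap P (fun p => xact p + t * d p) = (c, σ) := by
      simp only [Amap, Prod.mk.injEq]
      constructor
      · funext i
        have e : ∀ p ∈ P, (p.1 i : ℝ) * (xact p + t * d p)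
            = (p.1 i : ℝ) * xact p + t * ((p.1 i : ℝ) * z p - (p.1 i : ℝ) * xact p) := by
          intro p _
          simp only [hd]
          ring
        rw [Finset.sum_congr rfl e, Finset.sum_add_distrib, ← Finset.mul_sum,
          Finset.sum_sub_distrib, hact1 i, hz1 i]
        ring
      · have e : ∀ p ∈ P, (p.2 : ℝ) * (xact p + t * d p)
            = (p.2 : ℝ) * xact p + t * ((p.2 : ℝ) * z p - (p.2 : ℝ) * xact p) := by
          intro p _
          simp only [hd]
          ring
        rw [Finset.sum_congr rfl e, Finset.sum_add_distrib, ← Finset.mul_sum,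
          Finset.sum_sub_distrib, hact2, hz2]
        ring
    have hlow : 0 ≤ gFE P G (fun p => xact p + t * d p) - gFE P G xact := by
      have := hact_min (fun p => xact p + t * d p) hzt_nn hzt_feas
      linarith
    have hup : gFE P G (fun p => xact p + t * d p) - gFE P G xact ≤ t * F t := by
      simp only [gFE, hF]
      rw [← Finset.sum_sub_distrib, Finset.mul_sum]
      apply Finset.sum_le_sum
      intro p hp
      have hztp : 0 < xact p + t * d p := hzt_pos t ht0 ht1 p hp
      have hkey := mul_log_sub_le (hact_pos p hp) hztp
      have e : (xact p + t * d p) * (Real.log (xact p + t * d p) - 1 + G p)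
          - xact p * (Real.log (xact p) - 1 + G p)
          - t * (d p * (Real.log (xact p + t * d p) + G p))
          = (xact p * Real.log (xact p + t * d p) - xact p * Real.log (xact p))
            - ((xact p + t * d p) - xact p) := by
        ring
      linarith [e, hkey]
    have htF : 0 ≤ t * F t := le_trans hlow hup
    nlinarith [htF, ht0]
  have htend : Filter.Tendsto F (nhdsWithin 0 (Set.Ioi (0:ℝ)))
      (nhds (∑ p ∈ P, d p * (Real.log (xact p + 0 * d p) + G p))) := by
    have h0 : Filter.Tendsto F (nhds (0:ℝ))
        (nhds (∑ p ∈ P, d p * (Real.log (xact p + 0 * d p) + G p))) := by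
      simp only [hF]
      apply tendsto_finset_sum
      intro p hp
      apply Filter.Tendsto.mul tendsto_const_nhds
      apply Filter.Tendsto.add _ tendsto_const_nhds
      have hinner : ContinuousAt (fun t : ℝ => xact p + t * d p) 0 := by fun_prop
      have hlog : ContinuousAt Real.log ((fun t : ℝ => xact p + t * d p) 0) := by
        apply Real.continuousAt_log
        simp only [zero_mul, add_zero]
        exact (hact_pos p hp).ne'
      have hcomp : ContinuousAt (fun t : ℝ => Real.log (xact p + t * d p)) 0 :=
        ContinuousAt.comp (f := fun t : ℝ => xact p + t * d p) (g := Real.log) hlog hinner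
      simpa using hcomp.tendsto
    exact h0.mono_left nhdsWithin_le_nhds
  have hS_nonneg : 0 ≤ ∑ p ∈ P, d p * (Real.log (xact p) + G p) := by
    have h1 : 0 ≤ ∑ p ∈ P, d p * (Real.log (xact p + 0 * d p) + G p) := by
      apply ge_of_tendsto htend
      filter_upwards [Ioo_mem_nhdsGT_of_mem (Set.mem_Ico.2 ⟨le_refl (0:ℝ), zero_lt_one⟩)]
        with t ht
      exact hF_nonneg t ht.1 ht.2
    have h2 : ∑ p ∈ P, d p * (Real.log (xact p + 0 * d p) + G p)
        = ∑ p ∈ P, d p * (Real.log (xact p) + G p) := by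
      apply Finset.sum_congr rfl
      intro p _
      norm_num
    linarith [h1, h2.symm.le, h2.le]
  -- relative entropy bound
  have hkl_le : ∑ p ∈ P, (z p * Real.log (z p) - z p * Real.log (xact p) - z p + xact p)
      ≤ gFE P G z - gFE P G xact := by
    have hident : gFE P G z - gFE P G xact
        = ∑ p ∈ P, (z p * Real.log (z p) - z p * Real.log (xact p) - z p + xact p)
          + ∑ p ∈ P, d p * (Real.log (xact p) + G p) := by
      simp only [gFE]
      rw [← Finset.sum_sub_distrib, ← Finset.sum_add_distrib]
      apply Finset.sum_congr rfl
      intro p _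
      simp only [hd]
      ring
    linarith [hident, hS_nonneg]
  have hsingle : z k * Real.log (z k) - z k * Real.log (xact k) - z k + xact k
      ≤ ∑ p ∈ P, (z p * Real.log (z p) - z p * Real.log (xact p) - z p + xact p) :=
    Finset.single_le_sum
      (f := fun p => z p * Real.log (z p) - z p * Real.log (xact p) - z p + xact p)
      (fun p hp => kl_nonneg (hz_nn p hp) (hact_pos p hp)) hk
  have hpins := pinsker_pt (hz_nn k hk) (hact_pos k hk)
  have hδeq : δ = max (z k) (xact k) := hδ
  have heps : ε ^ 2 ≤ (z k - xact k) ^ 2 := by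
    have h1 : ε ≤ |z k - xact k| := hdiag
    nlinarith [h1, hε.le, sq_abs (z k - xact k), abs_nonneg (z k - xact k)]
  -- key free-energy bound
  have hKB := key_bound P G xact hP0 hPclosed hact_pos hne hRM hM
    (by rw [hact2]; exact hσ) (by rw [← hψ]; exact hψpos)
  rw [hact2, ← hψ] at hKB
  -- assemble the chain
  have hchain : ε ^ 2 / (2 * δ) ≤ σ * (1 + ψ) := by
    have hc : 0 < 2 * max (z k) (xact k) := by
      rw [← hδeq]
      linarith
    have hklk : ε ^ 2 / (2 * δ) ≤ z k * Real.log (z k) - z k * Real.log (xact k)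
        - z k + xact k := by
      rw [hδeq]
      refine le_trans ?_ hpins
      gcongr
    linarith [hklk, hsingle, hkl_le, hg_split, hy_le, hg_min, hKB]
  have hfin : ε ^ 2 / (2 * σ * δ) ≤ 1 + ψ := by
    rw [div_le_iff₀ (by positivity : (0:ℝ) < 2 * σ * δ)]
    rw [div_le_iff₀ (by linarith : (0:ℝ) < 2 * δ)] at hchain
    nlinarith [hchain]
  linarith [hfin]
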